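/- Let f : [0,a] → ℝ be measurable, nonnegative, with bounded range, b ∈ (0,a), and suppose f* is strictly decreasing from the left at t = b. Then the unique (up to a.e. equality) maximizer of ∫₀^a β(t) f(t) dt over measurable β : [0,a] → [0,1] with ∫₀^a β ≤ b is β(t) = 𝟙_{{t : f(t) > f*(b)}}(t). -/

import Mathlib

open MeasureTheory Set

/-- The asymmetric decreasing rearrangement of `f : [0,a] → ℝ`:
`f*(x) = ∫₀^∞ 𝟙_{[0, μ({y ∈ [0,a] : f(y) > t})]}(x) dt`. -/
noncomputable def rearr (a : ℝ) (f : ℝ → ℝ) (x : ℝ) : ℝ :=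
  ∫ t in Set.Ioi (0:ℝ),
    Set.indicator (Set.Icc (0:ℝ) ((volume {y ∈ Set.Icc (0:ℝ) a | t < f y}).toReal))
      (fun _ => (1:ℝ)) x

/-- `g` is strictly decreasing to the right at `x₀`. -/
def StrictDecRightAt (g : ℝ → ℝ) (x₀ : ℝ) : Prop :=
  ∃ ε₀ > (0:ℝ), ∀ ε : ℝ, 0 < ε → ε < ε₀ → g (x₀ + ε) < g x₀

/-- `g` is strictly decreasing from the left at `x₀`. -/
def StrictDecLeftAt (g : ℝ → ℝ) (x₀ : ℝ) : Prop :=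
  ∃ ε₀ > (0:ℝ), ∀ ε : ℝ, 0 < ε → ε < ε₀ → g x₀ < g (x₀ - ε)

section AuxBathtub

open ENNReal

noncomputable def Dm (a : ℝ) (f : ℝ → ℝ) (t : ℝ) : ℝ≥0∞ :=
  volume {y ∈ Set.Icc (0:ℝ) a | t < f y}

noncomputable def dR (a : ℝ) (f : ℝ → ℝ) (t : ℝ) : ℝ := (Dm a f t).toReal

lemma Dm_anti (a : ℝ) (f : ℝ → ℝ) : Antitone (Dm a f) := by
  intro s t hst
  exact measure_mono (fun y hy => ⟨hy.1, lt_of_le_of_lt hst hy.2⟩)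

lemma Dm_le (a : ℝ) (f : ℝ → ℝ) (t : ℝ) : Dm a f t ≤ ENNReal.ofReal a := by
  have h1 : Dm a f t ≤ volume (Set.Icc (0:ℝ) a) := measure_mono (fun y hy => hy.1)
  rwa [Real.volume_Icc, sub_zero] at h1

lemma Dm_ne_top (a : ℝ) (f : ℝ → ℝ) (t : ℝ) : Dm a f t ≠ ⊤ :=
  ((Dm_le a f t).trans_lt ENNReal.ofReal_lt_top).ne

lemma dR_anti (a : ℝ) (f : ℝ → ℝ) : Antitone (dR a f) := by
  intro s t hst
  exact ENNReal.toReal_mono (Dm_ne_top a f s) (Dm_anti a f hst)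

lemma dR_meas (a : ℝ) (f : ℝ → ℝ) : Measurable (dR a f) :=
  (dR_anti a f).measurable

lemma dR_nonneg (a : ℝ) (f : ℝ → ℝ) (t : ℝ) : 0 ≤ dR a f t := ENNReal.toReal_nonneg

lemma Dm_eq_zero (a : ℝ) (f : ℝ → ℝ) {M t : ℝ} (hM : ∀ x ∈ Set.Icc (0:ℝ) a, f x ≤ M)
    (ht : M ≤ t) : Dm a f t = 0 := by
  have : {y ∈ Set.Icc (0:ℝ) a | t < f y} = ∅ := by
    ext y; simp only [mem_setOf_eq, mem_empty_iff_false, iff_false, not_and]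
    intro hy hlt
    exact absurd ((hM y hy).trans ht) (not_le.mpr hlt)
  rw [Dm, this, measure_empty]

def Sset (a : ℝ) (f : ℝ → ℝ) (x : ℝ) : Set ℝ := {t : ℝ | 0 < t ∧ x ≤ dR a f t}

lemma rearr_eq (a : ℝ) (f : ℝ → ℝ) {x : ℝ} (hx : 0 < x) :
    rearr a f x = (volume (Sset a f x)).toReal := by
  have hpt : ∀ t : ℝ, Set.indicator (Set.Icc (0:ℝ) (dR a f t)) (fun _ => (1:ℝ)) x
      = Set.indicator {s : ℝ | x ≤ dR a f s} (fun _ => (1:ℝ)) t := by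
    intro t
    by_cases h : x ≤ dR a f t
    · simp [Set.indicator_apply, Set.mem_Icc, Set.mem_setOf_eq, h, hx.le]
    · simp [Set.indicator_apply, Set.mem_Icc, Set.mem_setOf_eq, h]
  have hms : MeasurableSet {s : ℝ | x ≤ dR a f s} :=
    measurableSet_le measurable_const (dR_meas a f)
  calc rearr a f x
      = ∫ t in Set.Ioi (0:ℝ), Set.indicator {s : ℝ | x ≤ dR a f s} (fun _ => (1:ℝ)) t := by
        unfold rearr
        exact integral_congr_ae (Filter.Eventually.of_forall (fun t => hpt t))
    _ = ∫ t in {s : ℝ | x ≤ dR a f s} ∩ Set.Ioi (0:ℝ), (1:ℝ) := by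
        rw [integral_indicator hms, Measure.restrict_restrict hms]
    _ = (volume (Sset a f x)).toReal := by
        have hset : {s : ℝ | x ≤ dR a f s} ∩ Set.Ioi (0:ℝ) = Sset a f x := by
          ext t
          simp only [Sset, mem_inter_iff, mem_setOf_eq, mem_Ioi]
          tauto
        rw [setIntegral_const, smul_eq_mul, mul_one, hset]; rfl

lemma Sset_subset (a : ℝ) (f : ℝ → ℝ) {M x : ℝ} (hM : ∀ y ∈ Set.Icc (0:ℝ) a, f y ≤ M)
    (hx : 0 < x) : Sset a f x ⊆ Set.Ioc 0 (max M 0) := by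
  rintro t ⟨ht0, htx⟩
  refine ⟨ht0, ?_⟩
  by_contra h
  push_neg at h
  have : dR a f t = 0 := by
    rw [dR, Dm_eq_zero a f hM ((le_max_left M 0).trans h.le), ENNReal.toReal_zero]
  rw [this] at htx
  exact absurd (hx.trans_le htx) (lt_irrefl 0)

lemma vol_Sset_ne_top (a : ℝ) (f : ℝ → ℝ) {M x : ℝ} (hM : ∀ y ∈ Set.Icc (0:ℝ) a, f y ≤ M)
    (hx : 0 < x) : volume (Sset a f x) ≠ ⊤ := by
  refine ((measure_mono (Sset_subset a f hM hx)).trans_lt ?_).ne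
  rw [Real.volume_Ioc]
  exact ENNReal.ofReal_lt_top

lemma q1 (a : ℝ) (f : ℝ → ℝ) {M x t : ℝ} (hM : ∀ y ∈ Set.Icc (0:ℝ) a, f y ≤ M)
    (hx : 0 < x) (ht : (volume (Sset a f x)).toReal < t) : dR a f t < x := by
  by_contra h
  push_neg at h
  have ht0 : 0 < t := lt_of_le_of_lt ENNReal.toReal_nonneg ht
  have hsub : Set.Ioc 0 t ⊆ Sset a f x := by
    rintro s ⟨hs0, hst⟩
    exact ⟨hs0, h.trans (dR_anti a f hst)⟩
  have h2 : ENNReal.ofReal t ≤ volume (Sset a f x) := by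
    have hv : volume (Set.Ioc (0:ℝ) t) = ENNReal.ofReal t := by
      rw [Real.volume_Ioc, sub_zero]
    rw [← hv]
    exact measure_mono hsub
  have := ENNReal.toReal_mono (vol_Sset_ne_top a f hM hx) h2
  rw [ENNReal.toReal_ofReal ht0.le] at this
  exact absurd (this.trans_lt ht) (lt_irrefl t)

lemma q2 (a : ℝ) (f : ℝ → ℝ) {M x t : ℝ} (hM : ∀ y ∈ Set.Icc (0:ℝ) a, f y ≤ M)
    (hx : 0 < x) (ht0 : 0 < t) (ht : t < (volume (Sset a f x)).toReal) : x ≤ dR a f t := by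
  by_contra h
  push_neg at h
  have hsub : Sset a f x ⊆ Set.Ioc 0 t := by
    rintro s ⟨hs0, hsx⟩
    refine ⟨hs0, ?_⟩
    by_contra hst
    push_neg at hst
    exact absurd (hsx.trans_lt ((dR_anti a f hst.le).trans_lt h)) (lt_irrefl x)
  have h2 : volume (Sset a f x) ≤ ENNReal.ofReal t := by
    have hv : volume (Set.Ioc (0:ℝ) t) = ENNReal.ofReal t := by
      rw [Real.volume_Ioc, sub_zero]
    rw [← hv]
    exact measure_mono hsub
  have := ENNReal.toReal_mono ENNReal.ofReal_ne_top h2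
  rw [ENNReal.toReal_ofReal ht0.le] at this
  exact absurd (ht.trans_le this) (lt_irrefl _)

lemma dR_rearr_le (a : ℝ) (f : ℝ → ℝ) {M b : ℝ} (hM : ∀ y ∈ Set.Icc (0:ℝ) a, f y ≤ M)
    (hb0 : 0 < b) : dR a f (rearr a f b) ≤ b := by
  set c := rearr a f b with hc
  have hc0 : 0 ≤ c := by rw [hc, rearr_eq a f hb0]; exact ENNReal.toReal_nonneg
  have hU : {y ∈ Set.Icc (0:ℝ) a | c < f y}
      = ⋃ n : ℕ, {y ∈ Set.Icc (0:ℝ) a | c + ((n:ℝ)+1)⁻¹ < f y} := by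
    ext y
    simp only [mem_setOf_eq, mem_iUnion]
    constructor
    · rintro ⟨hy, h⟩
      obtain ⟨n, hn⟩ := exists_nat_one_div_lt (sub_pos.mpr h)
      exact ⟨n, hy, by rw [one_div] at hn; linarith⟩
    · rintro ⟨n, hy, h⟩
      have : (0:ℝ) < ((n:ℝ)+1)⁻¹ := by positivity
      exact ⟨hy, by linarith⟩
  have hdir : Directed (· ⊆ ·) (fun n : ℕ => {y ∈ Set.Icc (0:ℝ) a | c + ((n:ℝ)+1)⁻¹ < f y}) := by
    refine Monotone.directed_le (fun n m hnm y hy => ⟨hy.1, lt_of_le_of_lt ?_ hy.2⟩)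
    have hnm' : (n:ℝ) ≤ m := Nat.cast_le.mpr hnm
    have : ((m:ℝ)+1)⁻¹ ≤ ((n:ℝ)+1)⁻¹ := inv_anti₀ (by positivity) (by linarith)
    linarith
  have hDm : Dm a f c = ⨆ n : ℕ, Dm a f (c + ((n:ℝ)+1)⁻¹) := by
    rw [Dm, hU]
    exact hdir.measure_iUnion
  have hle : Dm a f c ≤ ENNReal.ofReal b := by
    rw [hDm]
    refine iSup_le (fun n => ?_)
    have hgt : (volume (Sset a f b)).toReal < c + ((n:ℝ)+1)⁻¹ := by
      have : (0:ℝ) < ((n:ℝ)+1)⁻¹ := by positivity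
      rw [hc, rearr_eq a f hb0] at *
      linarith
    have := q1 a f hM hb0 hgt
    calc Dm a f (c + ((n:ℝ)+1)⁻¹) = ENNReal.ofReal (dR a f (c + ((n:ℝ)+1)⁻¹)) :=
          (ENNReal.ofReal_toReal (Dm_ne_top a f _)).symm
      _ ≤ ENNReal.ofReal b := ENNReal.ofReal_le_ofReal this.le
  have := ENNReal.toReal_mono ENNReal.ofReal_ne_top hle
  rwa [ENNReal.toReal_ofReal hb0.le] at this

lemma dR_rearr_ge (a : ℝ) (f : ℝ → ℝ) {M b : ℝ} (hM : ∀ y ∈ Set.Icc (0:ℝ) a, f y ≤ M)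
    (hb0 : 0 < b) (hdec : StrictDecLeftAt (rearr a f) b) : b ≤ dR a f (rearr a f b) := by
  set c := rearr a f b with hc
  have hc0 : 0 ≤ c := by rw [hc, rearr_eq a f hb0]; exact ENNReal.toReal_nonneg
  by_contra h
  push_neg at h
  obtain ⟨ε₀, hε₀, hd⟩ := hdec
  set ε := min (min (ε₀/2) (b/2)) ((b - dR a f c)/2) with hε
  have hεpos : 0 < ε := by
    apply lt_min (lt_min (by linarith) (by linarith))
    linarith
  have hεlt : ε < ε₀ := lt_of_le_of_lt ((min_le_left _ _).trans (min_le_left _ _)) (by linarith)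
  have hεb : ε < b := lt_of_le_of_lt ((min_le_left _ _).trans (min_le_right _ _)) (by linarith)
  have hεd : ε < b - dR a f c := lt_of_le_of_lt (min_le_right _ _) (by linarith)
  have h1 : c < rearr a f (b - ε) := hd ε hεpos hεlt
  have hbε : 0 < b - ε := by linarith
  rw [rearr_eq a f hbε] at h1
  set r' := (volume (Sset a f (b - ε))).toReal with hr'
  set t := (c + r')/2 with htdef
  have ht0 : 0 < t := by rw [htdef]; linarith
  have htlt : t < r' := by rw [htdef]; linarith
  have h2 : b - ε ≤ dR a f t := q2 a f hM hbε ht0 htlt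
  have h3 : dR a f t ≤ dR a f c := dR_anti a f (by rw [htdef]; linarith)
  linarith

lemma Dm_rearr (a : ℝ) (f : ℝ → ℝ) {M b : ℝ} (hM : ∀ y ∈ Set.Icc (0:ℝ) a, f y ≤ M)
    (hb0 : 0 < b) (hdec : StrictDecLeftAt (rearr a f) b) :
    Dm a f (rearr a f b) = ENNReal.ofReal b := by
  have h1 : dR a f (rearr a f b) = b :=
    le_antisymm (dR_rearr_le a f hM hb0) (dR_rearr_ge a f hM hb0 hdec)
  conv_rhs => rw [← h1]
  rw [dR, ENNReal.ofReal_toReal (Dm_ne_top a f _)]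

lemma Sset_meas (a : ℝ) (f : ℝ → ℝ) (x : ℝ) : MeasurableSet (Sset a f x) := by
  have : Sset a f x = Set.Ioi 0 ∩ {t : ℝ | x ≤ dR a f t} := by
    ext t; simp [Sset, Set.mem_setOf_eq]
  rw [this]
  exact measurableSet_Ioi.inter (measurableSet_le measurable_const (dR_meas a f))

lemma integrable_bdd (a : ℝ) {g : ℝ → ℝ}
    (hg : AEStronglyMeasurable g (volume.restrict (Set.Icc (0:ℝ) a))) {C : ℝ}
    (hC : ∀ t ∈ Set.Icc (0:ℝ) a, ‖g t‖ ≤ C) :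
    Integrable g (volume.restrict (Set.Icc (0:ℝ) a)) := by
  haveI : IsFiniteMeasure (volume.restrict (Set.Icc (0:ℝ) a)) :=
    ⟨by rw [Measure.restrict_apply_univ]; exact measure_Icc_lt_top⟩
  exact ⟨hg, HasFiniteIntegral.of_bounded
    ((ae_restrict_iff' measurableSet_Icc).mpr (Filter.Eventually.of_forall hC))⟩

lemma part1 (a : ℝ) (f : ℝ → ℝ) (hmf : Measurable f)
    (hnn : ∀ x ∈ Set.Icc (0:ℝ) a, 0 ≤ f x) {M : ℝ}
    (hM : ∀ x ∈ Set.Icc (0:ℝ) a, f x ≤ M) {b : ℝ} (hb0 : 0 < b)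
    (hdec : StrictDecLeftAt (rearr a f) b) :
    ∫ t in Set.Icc (0:ℝ) a,
        Set.indicator {t | rearr a f b < f t} (fun _ => (1:ℝ)) t * f t
      = ∫ t in Set.Icc (0:ℝ) b, rearr a f t := by
  set c := rearr a f b with hcdef
  have hc0 : 0 ≤ c := by rw [hcdef, rearr_eq a f hb0]; exact ENNReal.toReal_nonneg
  have hdRc : dR a f c = b :=
    le_antisymm (dR_rearr_le a f hM hb0) (dR_rearr_ge a f hM hb0 hdec)
  set A : Set ℝ := {t | c < f t} with hAdef
  have hA : MeasurableSet A := measurableSet_lt measurable_const hmf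
  set μ := volume.restrict (Set.Icc (0:ℝ) a) with hμdef
  -- rewrite integrand as indicator of f
  have hptwise : ∀ t : ℝ, Set.indicator A (fun _ => (1:ℝ)) t * f t = Set.indicator A f t := by
    intro t
    by_cases ht : t ∈ A
    · rw [Set.indicator_of_mem ht, Set.indicator_of_mem ht, one_mul]
    · rw [Set.indicator_of_notMem ht, Set.indicator_of_notMem ht, zero_mul]
  have hInt : Integrable (A.indicator f) μ := by
    refine integrable_bdd a (hmf.indicator hA).aestronglyMeasurable (C := max M 0) ?_
    intro t ht
    by_cases htA : t ∈ A
    · rw [Set.indicator_of_mem htA, Real.norm_eq_abs, abs_of_nonneg (hnn t ht)]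
      exact (hM t ht).trans (le_max_left M 0)
    · rw [Set.indicator_of_notMem htA, norm_zero]
      exact le_max_right M 0
  have hnn' : 0 ≤ᵐ[μ] A.indicator f := by
    refine (ae_restrict_iff' measurableSet_Icc).mpr (Filter.Eventually.of_forall ?_)
    intro t ht
    by_cases htA : t ∈ A
    · simpa [Set.indicator_of_mem htA] using hnn t ht
    · simp [Set.indicator_of_notMem htA]
  have key := hInt.integral_eq_integral_meas_lt hnn'
  -- identify the measure of superlevel sets
  have hmeas_eq : ∀ t ∈ Set.Ioi (0:ℝ),
      (μ {ω : ℝ | t < A.indicator f ω}).toReal = min (dR a f t) b := by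
    intro t ht
    have hset : {ω : ℝ | t < A.indicator f ω} ∩ Set.Icc (0:ℝ) a
        = {y ∈ Set.Icc (0:ℝ) a | max c t < f y} := by
      ext ω
      simp only [mem_inter_iff, mem_setOf_eq, max_lt_iff]
      constructor
      · rintro ⟨hω, hωa⟩
        by_cases hωA : ω ∈ A
        · rw [Set.indicator_of_mem hωA] at hω
          exact ⟨hωa, hωA, hω⟩
        · rw [Set.indicator_of_notMem hωA] at hω
          exact absurd (ht.trans hω) (lt_irrefl 0)
      · rintro ⟨hωa, hωc, hωt⟩
        have hωA : ω ∈ A := hωc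
        refine ⟨?_, hωa⟩
        show t < A.indicator f ω
        rw [Set.indicator_of_mem hωA]
        exact hωt
    have h1 : μ {ω : ℝ | t < A.indicator f ω} = Dm a f (max c t) := by
      rw [hμdef, Measure.restrict_apply (measurableSet_lt measurable_const
        (hmf.indicator hA)), hset, Dm]
    rw [h1]
    rcases le_total t c with htc | hct
    · have hmax : max c t = c := max_eq_left htc
      rw [hmax, ← dR, hdRc]
      have : b ≤ dR a f t := hdRc ▸ dR_anti a f htc
      rw [min_eq_right this]
    · have hmax : max c t = t := max_eq_right hct
      rw [hmax, ← dR]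
      have : dR a f t ≤ b := hdRc ▸ dR_anti a f hct
      rw [min_eq_left this]
  -- LHS equals real integral of min over Ioi 0
  have hLHS : ∫ t in Set.Icc (0:ℝ) a,
      Set.indicator A (fun _ => (1:ℝ)) t * f t
      = ∫ t in Set.Ioi (0:ℝ), min (dR a f t) b := by
    calc ∫ t in Set.Icc (0:ℝ) a, Set.indicator A (fun _ => (1:ℝ)) t * f t
        = ∫ t, A.indicator f t ∂μ := by
          rw [hμdef]; exact integral_congr_ae (Filter.Eventually.of_forall hptwise)
      _ = ∫ t in Set.Ioi (0:ℝ), (μ {ω : ℝ | t < A.indicator f ω}).toReal := key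
      _ = ∫ t in Set.Ioi (0:ℝ), min (dR a f t) b :=
          setIntegral_congr_fun measurableSet_Ioi (fun t ht => hmeas_eq t ht)
  -- convert LHS to a lintegral
  have hLHS2 : ∫ t in Set.Ioi (0:ℝ), min (dR a f t) b
      = (∫⁻ t in Set.Ioi (0:ℝ), ENNReal.ofReal (min (dR a f t) b)).toReal := by
    rw [integral_eq_lintegral_of_nonneg_ae
      (Filter.Eventually.of_forall (fun t => le_min (dR_nonneg a f t) hb0.le))
      ((dR_meas a f).min measurable_const).aestronglyMeasurable]
  -- RHS
  have hRHS : ∫ t in Set.Icc (0:ℝ) b, rearr a f t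
      = (∫⁻ x in Set.Ioc (0:ℝ) b, volume (Sset a f x)).toReal := by
    rw [integral_Icc_eq_integral_Ioc]
    rw [setIntegral_congr_fun measurableSet_Ioc
      (fun x hx => rearr_eq a f hx.1)]
    refine integral_toReal ?_ ?_
    · refine Measurable.aemeasurable ?_
      refine Antitone.measurable ?_
      intro x y hxy
      exact measure_mono (fun t ht => ⟨ht.1, hxy.trans ht.2⟩)
    · refine (ae_restrict_iff' measurableSet_Ioc).mpr (Filter.Eventually.of_forall ?_)
      intro x hx
      exact lt_top_iff_ne_top.mpr (vol_Sset_ne_top a f hM hx.1)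
  -- Fubini
  have hswap : ∫⁻ x in Set.Ioc (0:ℝ) b, volume (Sset a f x)
      = ∫⁻ t in Set.Ioi (0:ℝ), ENNReal.ofReal (min (dR a f t) b) := by
    have h1 : ∀ x : ℝ, volume (Sset a f x)
        = ∫⁻ t, (Sset a f x).indicator (fun _ => (1:ℝ≥0∞)) t :=
      fun x => (lintegral_indicator_one (Sset_meas a f x)).symm
    have hmeasP : Measurable (fun p : ℝ × ℝ =>
        (Sset a f p.1).indicator (fun _ => (1:ℝ≥0∞)) p.2) := by
      have hPset : MeasurableSet {p : ℝ × ℝ | 0 < p.2 ∧ p.1 ≤ dR a f p.2} := by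
        refine MeasurableSet.inter ?_ ?_
        · exact measurableSet_lt measurable_const measurable_snd
        · exact measurableSet_le measurable_fst ((dR_meas a f).comp measurable_snd)
      have heq : (fun p : ℝ × ℝ => (Sset a f p.1).indicator (fun _ => (1:ℝ≥0∞)) p.2)
          = Set.indicator {p : ℝ × ℝ | 0 < p.2 ∧ p.1 ≤ dR a f p.2} (fun _ => (1:ℝ≥0∞)) := by
        funext p
        by_cases hp : p.2 ∈ Sset a f p.1
        · rw [Set.indicator_of_mem hp,
            Set.indicator_of_mem (show p ∈ {p : ℝ × ℝ | 0 < p.2 ∧ p.1 ≤ dR a f p.2} from hp)]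
        · rw [Set.indicator_of_notMem hp,
            Set.indicator_of_notMem
              (show p ∉ {p : ℝ × ℝ | 0 < p.2 ∧ p.1 ≤ dR a f p.2} from fun h => hp h)]
      rw [heq]
      exact measurable_const.indicator hPset
    calc ∫⁻ x in Set.Ioc (0:ℝ) b, volume (Sset a f x)
        = ∫⁻ x in Set.Ioc (0:ℝ) b, ∫⁻ t, (Sset a f x).indicator (fun _ => (1:ℝ≥0∞)) t := by
          exact lintegral_congr (fun x => h1 x)
      _ = ∫⁻ t, ∫⁻ x in Set.Ioc (0:ℝ) b, (Sset a f x).indicator (fun _ => (1:ℝ≥0∞)) t := by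
          exact lintegral_lintegral_swap hmeasP.aemeasurable
      _ = ∫⁻ t, (Set.Ioi (0:ℝ)).indicator
            (fun s => ENNReal.ofReal (min (dR a f s) b)) t := by
          refine lintegral_congr (fun t => ?_)
          by_cases ht : 0 < t
          · have hx : ∀ x : ℝ, (Sset a f x).indicator (fun _ => (1:ℝ≥0∞)) t
                = (Set.Iic (dR a f t)).indicator (fun _ => (1:ℝ≥0∞)) x := by
              intro x
              by_cases hxt : x ≤ dR a f t
              · rw [Set.indicator_of_mem (show t ∈ Sset a f x from ⟨ht, hxt⟩),
                  Set.indicator_of_mem (show x ∈ Set.Iic (dR a f t) from hxt)]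
              · rw [Set.indicator_of_notMem
                    (show t ∉ Sset a f x from fun hc => hxt hc.2),
                  Set.indicator_of_notMem (show x ∉ Set.Iic (dR a f t) from hxt)]
            rw [lintegral_congr (fun x => hx x)]
            rw [lintegral_indicator measurableSet_Iic, Measure.restrict_restrict measurableSet_Iic]
            have hseteq : Set.Iic (dR a f t) ∩ Set.Ioc (0:ℝ) b
                = Set.Ioc (0:ℝ) (min (dR a f t) b) := by
              ext x
              simp only [mem_inter_iff, mem_Iic, mem_Ioc, le_min_iff]
              tauto
            rw [lintegral_one, Measure.restrict_apply_univ, hseteq, Real.volume_Ioc, sub_zero,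
              Set.indicator_of_mem (Set.mem_Ioi.mpr ht)]
          · have hx : ∀ x : ℝ, (Sset a f x).indicator (fun _ => (1:ℝ≥0∞)) t = 0 := by
              intro x
              exact Set.indicator_of_notMem (fun hc => ht hc.1) _
            rw [lintegral_congr (fun x => hx x), lintegral_zero,
              Set.indicator_of_notMem (fun hc => ht (Set.mem_Ioi.mp hc))]
      _ = ∫⁻ t in Set.Ioi (0:ℝ), ENNReal.ofReal (min (dR a f t) b) :=
          lintegral_indicator measurableSet_Ioi _
  rw [hLHS, hLHS2, hRHS, hswap]

end AuxBathtub

theorem stmt17 (a : ℝ) (ha : 0 < a) (f : ℝ → ℝ) (hmf : Measurable f)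
    (hnn : ∀ x ∈ Set.Icc (0:ℝ) a, 0 ≤ f x)
    (hbd : ∃ M : ℝ, ∀ x ∈ Set.Icc (0:ℝ) a, f x ≤ M) (b : ℝ) (hb : b ∈ Set.Ioo 0 a)
    (hdec : StrictDecLeftAt (rearr a f) b) :
    (∫ t in Set.Icc (0:ℝ) a,
        Set.indicator {t | rearr a f b < f t} (fun _ => (1:ℝ)) t * f t
      = ∫ t in Set.Icc (0:ℝ) b, rearr a f t) ∧
    (∀ β : ℝ → ℝ, Measurable β → (∀ t ∈ Set.Icc (0:ℝ) a, β t ∈ Set.Icc (0:ℝ) 1) →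
        (∫ t in Set.Icc (0:ℝ) a, β t ≤ b) →
        (∫ t in Set.Icc (0:ℝ) a, β t * f t ≤ ∫ t in Set.Icc (0:ℝ) b, rearr a f t) ∧
        ((∫ t in Set.Icc (0:ℝ) a, β t * f t = ∫ t in Set.Icc (0:ℝ) b, rearr a f t) →
          ∀ᵐ t ∂(volume.restrict (Set.Icc (0:ℝ) a)),
            β t = Set.indicator {t | rearr a f b < f t} (fun _ => (1:ℝ)) t)) := by
  obtain ⟨M, hM⟩ := hbd
  have hb0 : 0 < b := hb.1
  have hp1 := part1 a f hmf hnn hM hb0 hdec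
  refine ⟨hp1, ?_⟩
  intro β hmβ hβr hβint
  set c := rearr a f b with hcdef
  have hc0 : 0 ≤ c := by rw [hcdef, rearr_eq a f hb0]; exact ENNReal.toReal_nonneg
  have hdRc : dR a f c = b :=
    le_antisymm (dR_rearr_le a f hM hb0) (dR_rearr_ge a f hM hb0 hdec)
  set A : Set ℝ := {t | c < f t} with hAdef
  have hA : MeasurableSet A := measurableSet_lt measurable_const hmf
  set μ := volume.restrict (Set.Icc (0:ℝ) a) with hμdef
  set i : ℝ → ℝ := A.indicator (fun _ => (1:ℝ)) with hidef
  -- measure of A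
  have hμA : (μ A).toReal = b := by
    have h1 : μ A = Dm a f c := by
      rw [hμdef, Measure.restrict_apply hA, Dm]
      congr 1
      ext y
      simp only [mem_inter_iff, mem_setOf_eq, hAdef]
      tauto
    rw [h1, ← dR, hdRc]
  -- pointwise identity
  have hptwise : ∀ t : ℝ, i t * f t = A.indicator f t := by
    intro t
    by_cases ht : t ∈ A
    · rw [hidef, Set.indicator_of_mem ht, Set.indicator_of_mem ht, one_mul]
    · rw [hidef, Set.indicator_of_notMem ht, Set.indicator_of_notMem ht, zero_mul]
  -- integrabilities
  have hInt_if : Integrable (A.indicator f) μ := by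
    refine integrable_bdd a (hmf.indicator hA).aestronglyMeasurable (C := max M 0) ?_
    intro t ht
    by_cases htA : t ∈ A
    · rw [Set.indicator_of_mem htA, Real.norm_eq_abs, abs_of_nonneg (hnn t ht)]
      exact (hM t ht).trans (le_max_left M 0)
    · rw [Set.indicator_of_notMem htA, norm_zero]
      exact le_max_right M 0
  have hInt_β : Integrable β μ := by
    refine integrable_bdd a hmβ.aestronglyMeasurable (C := 1) ?_
    intro t ht
    rw [Real.norm_eq_abs, abs_le]
    exact ⟨by linarith [(hβr t ht).1], (hβr t ht).2⟩
  have hmi : Measurable i := measurable_const.indicator hA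
  have hi_cases : ∀ t : ℝ, i t = 0 ∨ i t = 1 := by
    intro t
    by_cases ht : t ∈ A
    · right; rw [hidef, Set.indicator_of_mem ht]
    · left; rw [hidef, Set.indicator_of_notMem ht]
  have hInt_i : Integrable i μ := by
    refine integrable_bdd a hmi.aestronglyMeasurable (C := 1) ?_
    intro t ht
    rcases hi_cases t with h | h <;> rw [h] <;> norm_num
  set hfun : ℝ → ℝ := fun t => (β t - i t) * (f t - c) with hhdef
  have hInt_h : Integrable hfun μ := by
    refine integrable_bdd a ((hmβ.sub hmi).mul
      (hmf.sub measurable_const)).aestronglyMeasurable (C := 1 * (max M 0 + c)) ?_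
    intro t ht
    rw [Real.norm_eq_abs, abs_mul]
    have h1 : |β t - i t| ≤ 1 := by
      rw [abs_le]
      rcases hi_cases t with h | h <;> rw [h] <;>
        constructor <;> linarith [(hβr t ht).1, (hβr t ht).2]
    have h2 : |f t - c| ≤ max M 0 + c := by
      rw [abs_le]
      constructor
      · linarith [hnn t ht, le_max_right M 0]
      · linarith [(hM t ht).trans (le_max_left M 0)]
    exact mul_le_mul h1 h2 (abs_nonneg _) zero_le_one
  -- integral of i
  have hi_val : ∫ t, i t ∂μ = b := by
    rw [hidef, integral_indicator hA, setIntegral_const, smul_eq_mul, mul_one]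
    exact hμA
  -- the key decomposition
  have hid : ∀ t : ℝ, β t * f t
      = hfun t + c * β t + A.indicator f t - c * i t := by
    intro t
    rw [hhdef, ← hptwise t]
    ring
  have hsplit : ∫ t, β t * f t ∂μ
      = (∫ t, hfun t ∂μ) + c * (∫ t, β t ∂μ) + (∫ t, A.indicator f t ∂μ) - c * b := by
    calc ∫ t, β t * f t ∂μ
        = ∫ t, (hfun t + c * β t + A.indicator f t - c * i t) ∂μ :=
          integral_congr_ae (Filter.Eventually.of_forall hid)
      _ = (∫ t, (hfun t + c * β t + A.indicator f t) ∂μ) - ∫ t, c * i t ∂μ :=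
          integral_sub ((hInt_h.add (hInt_β.const_mul c)).add hInt_if)
            (hInt_i.const_mul c)
      _ = ((∫ t, (hfun t + c * β t) ∂μ) + ∫ t, A.indicator f t ∂μ) - ∫ t, c * i t ∂μ := by
          congr 1
          exact integral_add (hInt_h.add (hInt_β.const_mul c)) hInt_if
      _ = ((∫ t, hfun t ∂μ) + ∫ t, c * β t ∂μ) + (∫ t, A.indicator f t ∂μ)
            - ∫ t, c * i t ∂μ := by
          congr 2
          exact integral_add hInt_h (hInt_β.const_mul c)
      _ = (∫ t, hfun t ∂μ) + c * (∫ t, β t ∂μ) + (∫ t, A.indicator f t ∂μ) - c * b := by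
          rw [integral_const_mul, integral_const_mul, hi_val]
  -- nonpositivity of h
  have hh_nonpos_pt : ∀ t ∈ Set.Icc (0:ℝ) a, hfun t ≤ 0 := by
    intro t ht
    rw [hhdef]
    by_cases htA : t ∈ A
    · have h1 : i t = 1 := by rw [hidef, Set.indicator_of_mem htA]
      have h2 : c < f t := htA
      refine mul_nonpos_iff.mpr (Or.inr ⟨?_, ?_⟩)
      · rw [h1]; linarith [(hβr t ht).2]
      · linarith
    · have h1 : i t = 0 := by rw [hidef, Set.indicator_of_notMem htA]
      have h2 : ¬ c < f t := htA
      refine mul_nonpos_iff.mpr (Or.inl ⟨?_, ?_⟩)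
      · rw [h1]; linarith [(hβr t ht).1]
      · push_neg at h2; linarith
  have hh_nonpos_ae : hfun ≤ᵐ[μ] 0 := by
    rw [hμdef]
    exact (ae_restrict_iff' measurableSet_Icc).mpr
      (Filter.Eventually.of_forall hh_nonpos_pt)
  have hh_int_nonpos : ∫ t, hfun t ∂μ ≤ 0 := integral_nonpos_of_ae hh_nonpos_ae
  -- part 1 restated
  have hif_val : ∫ t, A.indicator f t ∂μ = ∫ t in Set.Icc (0:ℝ) b, rearr a f t := by
    rw [← hp1, hμdef]
    exact integral_congr_ae (Filter.Eventually.of_forall (fun t => (hptwise t).symm))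
  have hβb : ∫ t, β t ∂μ ≤ b := hβint
  have hcβ : c * (∫ t, β t ∂μ) - c * b ≤ 0 := by
    have := mul_le_mul_of_nonneg_left hβb hc0
    linarith
  constructor
  · rw [hsplit, hif_val]; linarith
  · -- equality case
    intro heq
    rw [hsplit, hif_val] at heq
    have hzero : ∫ t, hfun t ∂μ = 0 := by linarith
    -- h = 0 a.e.
    have hae0 : hfun =ᵐ[μ] 0 := by
      have hneg : (0:ℝ → ℝ) ≤ᵐ[μ] (fun t => -hfun t) := by
        filter_upwards [hh_nonpos_ae] with t ht
        simpa using ht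
      have hint0 : ∫ t, -hfun t ∂μ = 0 := by rw [integral_neg, hzero, neg_zero]
      have := (integral_eq_zero_iff_of_nonneg_ae hneg hInt_h.neg).mp hint0
      filter_upwards [this] with t ht
      simpa using ht
    have hF1 : ∀ᵐ t ∂μ, t ∈ A → β t = 1 := by
      filter_upwards [hae0] with t ht htA
      have h1 : i t = 1 := by rw [hidef, Set.indicator_of_mem htA]
      have h2 : c < f t := htA
      rw [hhdef] at ht
      simp only [Pi.zero_apply] at ht
      rcases mul_eq_zero.mp ht with h | h
      · rw [h1] at h; linarith
      · linarith
    -- integral of indicator A β equals b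
    have hIand : Integrable (A.indicator β) μ := by
      refine integrable_bdd a (hmβ.indicator hA).aestronglyMeasurable (C := 1) ?_
      intro t ht
      by_cases htA : t ∈ A
      · rw [Set.indicator_of_mem htA, Real.norm_eq_abs, abs_le]
        exact ⟨by linarith [(hβr t ht).1], (hβr t ht).2⟩
      · rw [Set.indicator_of_notMem htA, norm_zero]; norm_num
    have hIandc : Integrable (Aᶜ.indicator β) μ := by
      refine integrable_bdd a (hmβ.indicator hA.compl).aestronglyMeasurable (C := 1) ?_
      intro t ht
      by_cases htA : t ∈ Aᶜ
      · rw [Set.indicator_of_mem htA, Real.norm_eq_abs, abs_le]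
        exact ⟨by linarith [(hβr t ht).1], (hβr t ht).2⟩
      · rw [Set.indicator_of_notMem htA, norm_zero]; norm_num
    have hindβ : ∫ t, A.indicator β t ∂μ = b := by
      have : A.indicator β =ᵐ[μ] i := by
        filter_upwards [hF1] with t ht
        by_cases htA : t ∈ A
        · rw [Set.indicator_of_mem htA, hidef, Set.indicator_of_mem htA, ht htA]
        · rw [Set.indicator_of_notMem htA, hidef, Set.indicator_of_notMem htA]
      rw [integral_congr_ae this, hi_val]
    have hsplitβ : ∫ t, β t ∂μ
        = (∫ t, A.indicator β t ∂μ) + (∫ t, Aᶜ.indicator β t ∂μ) := by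
      rw [← integral_add hIand hIandc]
      refine integral_congr_ae (Filter.Eventually.of_forall (fun t => ?_))
      simp only [Pi.add_apply]
      by_cases htA : t ∈ A
      · rw [Set.indicator_of_mem htA, Set.indicator_of_notMem (by simpa using htA)]
        ring
      · rw [Set.indicator_of_notMem htA, Set.indicator_of_mem (by simpa using htA)]
        ring
    have hcompl_nonneg : (0:ℝ → ℝ) ≤ᵐ[μ] Aᶜ.indicator β := by
      rw [hμdef]
      refine (ae_restrict_iff' measurableSet_Icc).mpr (Filter.Eventually.of_forall ?_)
      intro t ht
      by_cases htA : t ∈ Aᶜ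
      · simp only [Pi.zero_apply, Set.indicator_of_mem htA]
        exact (hβr t ht).1
      · simp [Set.indicator_of_notMem htA]
    have hcompl_zero : ∫ t, Aᶜ.indicator β t ∂μ = 0 := by
      have hle : ∫ t, Aᶜ.indicator β t ∂μ ≤ 0 := by
        rw [hsplitβ, hindβ] at hβb
        linarith
      have hge : 0 ≤ ∫ t, Aᶜ.indicator β t ∂μ := integral_nonneg_of_ae hcompl_nonneg
      linarith
    have hF2 : ∀ᵐ t ∂μ, t ∉ A → β t = 0 := by
      have := (integral_eq_zero_iff_of_nonneg_ae hcompl_nonneg hIandc).mp hcompl_zero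
      filter_upwards [this] with t ht htA
      rw [Set.indicator_of_mem (by simpa using htA)] at ht
      exact ht
    filter_upwards [hF1, hF2] with t h1 h2
    show β t = A.indicator (fun _ => (1:ℝ)) t
    by_cases htA : t ∈ A
    · rw [Set.indicator_of_mem htA, h1 htA]
    · rw [Set.indicator_of_notMem htA, h2 htA]
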